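/- Let p be an odd prime, K a field of characteristic ≠ p containing ζ_p, K(a^{1/p})/K cyclic of degree p with Galois group generated by σ_a, and β ∈ K(a^{1/p})^× with N_{K(a^{1/p})/K}(β) = b ∈ K^×. For 1 ≤ n < p define A_n = ∏_{i=0}^{p-1} σ_a^i(β^{C(i,n)}), where C(i,n) is the binomial coefficient. Then for each 2 ≤ n < p: σ_a(A_n)/A_n · σ_a(A_{n-1}) = β^{C(p,n)}. -/

import Mathlib

/-!
By Pascal's rule `C(i+1,n+1) = C(i,n+1) + C(i,n)`, the product `σ(A_{n+1}) σ(A_n)` is `A_{n+1}`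
with its index shifted by one. The shift loses the factor `i = 0`, which is `1` since
`C(0,n+1) = 0`, and gains the factor `i = p`, which is `β^{C(p,n+1)}` since `σ^p = 1`.
-/

open Finset

section BinomialNormProduct

variable {R L : Type*} [CommSemiring R] [CommSemiring L] [Algebra R L]

/-- The paper's `A_n`. -/
def binomialNormProd (σ : L ≃ₐ[R] L) (β : L) (p n : ℕ) : L :=
  ∏ i ∈ range p, (σ ^ i) (β ^ i.choose n)

theorem map_binomialNormProd_succ_mul (σ : L ≃ₐ[R] L) (β : L) (p n : ℕ) :
    σ (binomialNormProd σ β p (n + 1)) * σ (binomialNormProd σ β p n) =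
      ∏ i ∈ range p, (σ ^ (i + 1)) (β ^ (i + 1).choose (n + 1)) := by
  rw [binomialNormProd, binomialNormProd, map_prod, map_prod, ← prod_mul_distrib]
  refine prod_congr rfl fun i _ => ?_
  rw [pow_succ' σ, AlgEquiv.mul_apply, Nat.choose_succ_succ, pow_add,
    map_mul, map_mul, mul_comm]

theorem map_binomialNormProd_succ_mul_eq (σ : L ≃ₐ[R] L) (β : L) (p n : ℕ) :
    σ (binomialNormProd σ β p (n + 1)) * σ (binomialNormProd σ β p n) =
      binomialNormProd σ β p (n + 1) * (σ ^ p) (β ^ p.choose (n + 1)) := by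
  have h := prod_range_succ' (fun i => (σ ^ i) (β ^ i.choose (n + 1))) p
  rw [prod_range_succ] at h
  simp only [Nat.choose_zero_succ, pow_zero, map_one, mul_one] at h
  rw [map_binomialNormProd_succ_mul, ← h, binomialNormProd]

theorem map_binomialNormProd_succ_mul_of_pow_eq_one {σ : L ≃ₐ[R] L} {p : ℕ} (hσ : σ ^ p = 1)
    (β : L) (n : ℕ) :
    σ (binomialNormProd σ β p (n + 1)) * σ (binomialNormProd σ β p n) =
      binomialNormProd σ β p (n + 1) * β ^ p.choose (n + 1) := by
  rw [map_binomialNormProd_succ_mul_eq, hσ, AlgEquiv.one_apply]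

end BinomialNormProduct

theorem stmt17_general (p : ℕ)
    (K L : Type*) [Field K] [Field L] [Algebra K L]
    (σ : L ≃ₐ[K] L) (hσ : orderOf σ = p)
    (β : L) :
    ∀ n : ℕ, 2 ≤ n → n < p →
      σ (∏ i ∈ Finset.range p, (σ ^ i) (β ^ (i.choose n))) *
          σ (∏ i ∈ Finset.range p, (σ ^ i) (β ^ (i.choose (n - 1)))) =
        (∏ i ∈ Finset.range p, (σ ^ i) (β ^ (i.choose n))) * β ^ (p.choose n) := by
  rintro n hn -
  obtain ⟨m, rfl⟩ : ∃ m, n = m + 1 := ⟨n - 1, by omega⟩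
  exact map_binomialNormProd_succ_mul_of_pow_eq_one (hσ ▸ pow_orderOf_eq_one σ) β m

/-- With `L = K(a^{1/p})` cyclic of degree `p` over `K`, Galois generator `σ`,
`β ∈ L` of norm `b ∈ K`, and `A_n = ∏_{i<p} σ^i(β^{C(i,n)})`: for `2 ≤ n < p`,
`σ(A_n)/A_n · σ(A_{n-1}) = β^{C(p,n)}`, i.e. `σ(A_n)·σ(A_{n-1}) = A_n·β^{C(p,n)}`. -/
theorem stmt17 (p : ℕ) (hp : p.Prime) (hodd : Odd p)
    (K L : Type*) [Field K] [Field L] [Algebra K L]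
    (hchar : ringChar K ≠ p)
    (ζ : K) (hζ : IsPrimitiveRoot ζ p)
    (a b : K) (α : L) (hα : α ^ p = algebraMap K L a)
    (hdeg : Module.finrank K L = p)
    (σ : L ≃ₐ[K] L) (hσ : orderOf σ = p) (hσα : σ α = algebraMap K L ζ * α)
    (β : L) (hβ0 : β ≠ 0)
    (hNβ : ∏ i ∈ Finset.range p, (σ ^ i) β = algebraMap K L b) :
    ∀ n : ℕ, 2 ≤ n → n < p →
      σ (∏ i ∈ Finset.range p, (σ ^ i) (β ^ (i.choose n))) *
          σ (∏ i ∈ Finset.range p, (σ ^ i) (β ^ (i.choose (n - 1)))) =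
        (∏ i ∈ Finset.range p, (σ ^ i) (β ^ (i.choose n))) * β ^ (p.choose n) :=
  stmt17_general p K L σ hσ β
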